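/- Let E = (V, E, s, t) be a directed graph, E_0 = (V_0, E_0) a directed subgraph (V_0 ⊆ V, E_0 ⊆ E, endpoints of edges in E_0 lie in V_0). Suppose E_0 is endpoint-closed in E: for every profile-loop (p; e') of E with p a composable path all of whose edges lie in E_0, the edge e' lies in E_0. Then for any two profile-loops u = (p; e_0) and u' = (q; e_i) of E such that the composition u ∘_i u' is defined and all edges of the path and output of u ∘_i u' lie in E_0, both u and u' have all their edges (inputs and output) in E_0. -/

import Mathlib

/-- A profile-loop in a directed graph `(V, E, s, t)`. -/
structure ProfileLoop (V E : Type) (s t : E → V) where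
  path : List E
  out : E
  chain : path.Chain' (fun e f => t e = s f)
  src_eq : ∀ e ∈ path.head?, s e = s out
  tgt_eq : ∀ e ∈ path.getLast?, t e = t out
  loop_empty : path = [] → s out = t out

/-- Splicing a list `q` into the `i`-th (1-indexed) position of a list `p`. -/
def splice {E : Type} (p q : List E) (i : ℕ) : List E :=
  p.take (i - 1) ++ q ++ p.drop i

/-!
Splicing `u'` into the `i`-th slot of `u` keeps every input edge of `u'` and every input edge
of `u` except the `i`-th one, which is `u'.out`; so only `u'.out` needs an argument. Its source
is the source of `u.out` (when `i = 1`) or the target of the `(i-1)`-th input edge of `u`, hence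
lies in `V₀` in either case, and endpoint-closedness applied to `u'` puts `u'.out` in `E₀` (this
also covers an empty input path of `u'`).
-/

namespace List

theorem eq_take_append_cons_drop_of_getElem?_eq {α : Type*} {l : List α} {k : ℕ} {a : α}
    (h : l[k]? = some a) : l = l.take k ++ a :: l.drop (k + 1) := by
  obtain ⟨hk, rfl⟩ := getElem?_eq_some_iff.mp h
  rw [← drop_eq_getElem_cons hk, take_append_drop]

end List

theorem mem_splice_succ {α : Type} {p q : List α} {k : ℕ} {x : α} :
    x ∈ splice p q (k + 1) ↔ x ∈ p.take k ∨ x ∈ q ∨ x ∈ p.drop (k + 1) := by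
  simp only [splice, Nat.add_sub_cancel, List.mem_append, or_assoc]

namespace ProfileLoop

variable {V E : Type} {s t : E → V} (u : ProfileLoop V E s t)

theorem src_path_zero (h : 0 < u.path.length) : s u.path[0] = s u.out :=
  u.src_eq _ (by simp [List.head?_eq_getElem?, h])

theorem src_path_succ {k : ℕ} (h : k + 1 < u.path.length) : s u.path[k + 1] = t u.path[k] :=
  (List.isChain_iff_getElem.mp u.chain k h).symm

theorem src_path_mem {V₀ : Set V} {E₀ : Set E} (hsub : ∀ e ∈ E₀, s e ∈ V₀ ∧ t e ∈ V₀)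
    (hout : u.out ∈ E₀) {k : ℕ} (hpre : ∀ e ∈ u.path.take k, e ∈ E₀)
    (hk : k < u.path.length) : s u.path[k] ∈ V₀ := by
  cases k with
  | zero => exact u.src_path_zero hk ▸ (hsub _ hout).1
  | succ k =>
    have hprev : u.path[k] ∈ E₀ := hpre _ (List.mem_take_iff_getElem.mpr ⟨k, by grind, rfl⟩)
    exact u.src_path_succ hk ▸ (hsub _ hprev).2

end ProfileLoop

theorem endpoint_closed_implies_factor_closed_general {V E : Type} (s t : E → V)
    (V₀ : Set V) (E₀ : Set E)
    (hsub : ∀ e ∈ E₀, s e ∈ V₀ ∧ t e ∈ V₀)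
    (hclosed : ∀ u : ProfileLoop V E s t,
        (∀ e ∈ u.path, e ∈ E₀) → (u.path = [] → s u.out ∈ V₀) → u.out ∈ E₀)
    (u u' : ProfileLoop V E s t) (i : ℕ)
    (hi1 : 1 ≤ i)
    (hmatch : u.path[i - 1]? = some u'.out)
    (hcomp_path : ∀ e ∈ splice u.path u'.path i, e ∈ E₀)
    (hcomp_out : u.out ∈ E₀) :
    ((∀ e ∈ u.path, e ∈ E₀) ∧ u.out ∈ E₀) ∧
    ((∀ e ∈ u'.path, e ∈ E₀) ∧ u'.out ∈ E₀) := by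
  obtain ⟨k, rfl⟩ := Nat.exists_eq_add_of_le' hi1
  rw [Nat.add_sub_cancel] at hmatch
  have hk : k < u.path.length := (List.getElem?_eq_some_iff.mp hmatch).1
  have hpre : ∀ e ∈ u.path.take k, e ∈ E₀ := fun e he =>
    hcomp_path e (mem_splice_succ.mpr (.inl he))
  have hq : ∀ e ∈ u'.path, e ∈ E₀ := fun e he =>
    hcomp_path e (mem_splice_succ.mpr (.inr (.inl he)))
  have hsuf : ∀ e ∈ u.path.drop (k + 1), e ∈ E₀ := fun e he =>
    hcomp_path e (mem_splice_succ.mpr (.inr (.inr he)))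
  have hbase : s u'.out ∈ V₀ := by
    have hsrc := u.src_path_mem hsub hcomp_out hpre hk
    rwa [(List.getElem?_eq_some_iff.mp hmatch).2] at hsrc
  have hout' : u'.out ∈ E₀ := hclosed u' hq fun _ => hbase
  refine ⟨⟨?_, hcomp_out⟩, hq, hout'⟩
  rw [List.eq_take_append_cons_drop_of_getElem?_eq hmatch]
  simp only [List.mem_append, List.mem_cons]
  rintro e (he | rfl | he)
  exacts [hpre e he, hout', hsuf e he]

/-- Endpoint-closedness implies factor-closedness.  Let `(V₀, E₀)` be a
directed subgraph of `(V, E, s, t)` (edges of `E₀` have endpoints in `V₀`)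
which is endpoint-closed: for every profile-loop `(p; e')` of `E` whose input
path lies in `E₀` (for the empty path: whose base vertex lies in `V₀`), the
output edge `e'` lies in `E₀`.  Then for any profile-loops `u = (p; e₀)` and
`u' = (q; eᵢ)` whose partial composition `u ∘ᵢ u'` is defined and has all its
input edges and its output edge in `E₀` (for the empty spliced path: base
vertex in `V₀`), both `u` and `u'` have all their input edges and their output
edges in `E₀`. -/
theorem endpoint_closed_implies_factor_closed {V E : Type} (s t : E → V)
    (V₀ : Set V) (E₀ : Set E)
    (hsub : ∀ e ∈ E₀, s e ∈ V₀ ∧ t e ∈ V₀)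
    (hclosed : ∀ u : ProfileLoop V E s t,
        (∀ e ∈ u.path, e ∈ E₀) → (u.path = [] → s u.out ∈ V₀) → u.out ∈ E₀)
    (u u' : ProfileLoop V E s t) (i : ℕ)
    (hi1 : 1 ≤ i) (hin : i ≤ u.path.length)
    (hmatch : u.path[i - 1]? = some u'.out)
    (hcomp_path : ∀ e ∈ splice u.path u'.path i, e ∈ E₀)
    (hcomp_out : u.out ∈ E₀)
    (hcomp_empty : splice u.path u'.path i = [] → s u.out ∈ V₀) :
    ((∀ e ∈ u.path, e ∈ E₀) ∧ u.out ∈ E₀) ∧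
    ((∀ e ∈ u'.path, e ∈ E₀) ∧ u'.out ∈ E₀) :=
  endpoint_closed_implies_factor_closed_general s t V₀ E₀ hsub hclosed u u' i hi1 hmatch hcomp_path
    hcomp_out
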